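/- With λ(θ), f(θ) = -log λ - 2θ - θ log(1-4λ), and j(θ) = -(1/2)log(1-4(θ+1)λ) + (1/2)log 2 as above, the functions satisfy (4θλ - exp(-f'))·j' + (f''/2)·(4θ²λ + exp(-f')) + 4λ(1/2 - θ) = 0 for all θ > 0. -/

import Mathlib

open Real Filter Set

noncomputable def artanh (x : ℝ) : ℝ := (1/2) * Real.log ((1+x)/(1-x))

noncomputable def thetaF (l : ℝ) : ℝ := -1 + _root_.artanh (Real.sqrt (1-4*l)) / Real.sqrt (1-4*l)

/-! Writing `s = √(1 - 4λ)`, the relation `θ(λ) = θ` reads `artanh s = (θ + 1) s`. Comparing the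
power series of `artanh s` and `s / (1 - s²)` termwise gives `4 (θ + 1) λ < 1`, which makes `θ(λ)`
strictly decreasing; hence `λ` is continuous and, by the inverse function rule,
`λ' = -2λ(1 - 4λ) / (1 - 4(θ + 1)λ)`. Then `f' = -log (1 - 4λ)`, so `exp (-f') = 1 - 4λ` and
`f'' = 4λ' / (1 - 4λ)`, while `j'` is explicit in `λ` and `λ'`: the identity becomes an identity of
rational functions of `θ` and `λ`. -/

open Topology

lemma hasDerivAt_artanh {x : ℝ} (hx : x ∈ Ioo (-1 : ℝ) 1) :
    HasDerivAt _root_.artanh (1 / (1 - x ^ 2)) x := by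
  obtain ⟨h1, h2⟩ := hx
  have hp : 0 < 1 + x := by linarith
  have hm : 0 < 1 - x := by linarith
  have hq : HasDerivAt (fun y => (1 + y) / (1 - y))
      ((1 * (1 - x) - (1 + x) * (-1)) / (1 - x) ^ 2) x :=
    ((hasDerivAt_id' x).const_add 1).div ((hasDerivAt_id' x).const_sub 1) hm.ne'
  have hx2 : 1 - x ^ 2 ≠ 0 := by nlinarith
  refine ((hq.log (div_pos hp hm).ne').const_mul (1 / 2)).congr_deriv ?_
  field_simp
  ring

lemma artanh_lt_div_one_sub_sq {s : ℝ} (h0 : 0 < s) (h1 : s < 1) :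
    _root_.artanh s < s / (1 - s ^ 2) := by
  have hs2 : s ^ 2 < 1 := by nlinarith
  have hlog := hasSum_log_sub_log_of_abs_lt_one (abs_lt.2 ⟨by linarith, h1⟩)
  have hgeom : HasSum (fun k : ℕ => 2 * s ^ (2 * k + 1)) (2 * (s / (1 - s ^ 2))) := by
    have h := ((hasSum_geometric_of_lt_one (sq_nonneg s) hs2).mul_left s).mul_left 2
    simpa only [← pow_mul, ← pow_succ', ← div_eq_mul_inv] using h
  have hlt := hasSum_lt (i := 1) (fun k => ?_) ?_ hlog hgeom
  · rw [_root_.artanh, log_div (by linarith) (by linarith)]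
    linarith
  · have hk : (1 : ℝ) / (2 * k + 1) ≤ 1 := by
      rw [div_le_one (by positivity)]; linarith [k.cast_nonneg (α := ℝ)]
    have := pow_pos h0 (2 * k + 1)
    nlinarith
  · norm_num
    nlinarith [pow_pos h0 3]

lemma hasDerivAt_thetaF {l : ℝ} (hl : l ∈ Ioo (0 : ℝ) (1 / 4)) :
    HasDerivAt thetaF (-(1 - 4 * (thetaF l + 1) * l) / (2 * l * (1 - 4 * l))) l := by
  obtain ⟨h0, h1⟩ := hl
  have hpos : 0 < 1 - 4 * l := by linarith
  have hS : HasDerivAt (fun y => √(1 - 4 * y)) (-(4 * 1) / (2 * √(1 - 4 * l))) l :=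
    (((hasDerivAt_id' l).const_mul 4).const_sub 1).sqrt hpos.ne'
  set s := √(1 - 4 * l) with hs
  have hs0 : 0 < s := sqrt_pos.2 hpos
  have hsq : s ^ 2 = 1 - 4 * l := sq_sqrt hpos.le
  have hs1 : s < 1 := by nlinarith
  have hA := (hasDerivAt_artanh ⟨by linarith, hs1⟩).comp l hS
  refine ((hA.div hS hs0.ne').const_add (-1)).congr_deriv ?_
  have h1s : 1 - s ^ 2 ≠ 0 := by nlinarith
  simp only [thetaF, Function.comp_apply, ← hs]
  field_simp
  rw [hsq]
  ring

lemma four_mul_thetaF_add_one_mul_lt_one {l : ℝ} (hl : l ∈ Ioo (0 : ℝ) (1 / 4)) :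
    4 * (thetaF l + 1) * l < 1 := by
  obtain ⟨h0, h1⟩ := hl
  have hpos : 0 < 1 - 4 * l := by linarith
  set s := √(1 - 4 * l) with hs
  have hs0 : 0 < s := sqrt_pos.2 hpos
  have hsq : s ^ 2 = 1 - 4 * l := sq_sqrt hpos.le
  have hlt := artanh_lt_div_one_sub_sq hs0 (by nlinarith)
  rw [hsq, show 1 - (1 - 4 * l) = 4 * l by ring, lt_div_iff₀ (by positivity)] at hlt
  have : thetaF l + 1 = _root_.artanh s / s := by simp only [thetaF, ← hs]; ring
  rwa [this, show 4 * (_root_.artanh s / s) * l = _root_.artanh s * (4 * l) / s by ring,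
    div_lt_one hs0]

lemma strictAntiOn_thetaF : StrictAntiOn thetaF (Ioo (0 : ℝ) (1 / 4)) := by
  refine strictAntiOn_of_hasDerivWithinAt_neg (convex_Ioo _ _)
    (fun l hl => (hasDerivAt_thetaF hl).continuousAt.continuousWithinAt)
    (fun l hl => (hasDerivAt_thetaF (interior_subset hl)).hasDerivWithinAt) fun l hl => ?_
  rw [interior_Ioo] at hl
  have hlt := four_mul_thetaF_add_one_mul_lt_one hl
  have hden : 0 < 2 * l * (1 - 4 * l) := mul_pos (by linarith [hl.1]) (by linarith [hl.2])
  exact div_neg_of_neg_of_pos (by linarith) hden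

lemma continuousAt_of_strictAntiOn_of_leftInverse {α β : Type*} [LinearOrder α]
    [TopologicalSpace α] [OrderTopology α] [LinearOrder β] [TopologicalSpace β] [OrderTopology β]
    [DenselyOrdered β] {g : β → α} {u : α → β} {s : Set β} {a : α}
    (hg : StrictAntiOn g s) (hgc : ContinuousAt g (u a)) (hs : s ∈ 𝓝 (u a))
    (hu : ∀ᶠ x in 𝓝 a, u x ∈ s ∧ g (u x) = x) : ContinuousAt u a := by
  set U := {x | u x ∈ s ∧ g (u x) = x}
  have hanti : AntitoneOn u U := fun x hx y hy hxy => by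
    by_contra! h
    have := hg hx.1 hy.1 h
    rw [hx.2, hy.2] at this
    exact this.not_ge hxy
  have himage : u '' U ∈ 𝓝 (u a) := by
    have hga : Tendsto g (𝓝 (u a)) (𝓝 a) := by
      simpa only [hu.self_of_nhds.2] using hgc.tendsto
    filter_upwards [hs, hga hu] with l hl hgl
    exact ⟨g l, hgl, hg.injOn hgl.1 hl hgl.2⟩
  exact continuousAt_of_monotoneOn_of_image_mem_nhds (β := βᵒᵈ) hanti.dual_right hu himage

section InverseOfThetaF

variable {lam : ℝ → ℝ}

lemma four_mul_add_one_mul_lt_one (hmem : ∀ θ > (0:ℝ), lam θ ∈ Ioo (0:ℝ) (1/4))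
    (hinv : ∀ θ > (0:ℝ), thetaF (lam θ) = θ) {θ : ℝ} (hθ : 0 < θ) :
    4 * (θ + 1) * lam θ < 1 := by
  simpa only [hinv θ hθ] using four_mul_thetaF_add_one_mul_lt_one (hmem θ hθ)

lemma hasDerivAt_lam (hmem : ∀ θ > (0:ℝ), lam θ ∈ Ioo (0:ℝ) (1/4))
    (hinv : ∀ θ > (0:ℝ), thetaF (lam θ) = θ) {θ : ℝ} (hθ : 0 < θ) :
    HasDerivAt lam (-2 * lam θ * (1 - 4 * lam θ) / (1 - 4 * (θ + 1) * lam θ)) θ := by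
  obtain ⟨hl0, hl1⟩ := hmem θ hθ
  have hev : ∀ᶠ t in 𝓝 θ, lam t ∈ Ioo (0:ℝ) (1/4) ∧ thetaF (lam t) = t :=
    (eventually_gt_nhds hθ).mono fun t ht => ⟨hmem t ht, hinv t ht⟩
  have hcont : ContinuousAt lam θ :=
    continuousAt_of_strictAntiOn_of_leftInverse strictAntiOn_thetaF
      (hasDerivAt_thetaF (hmem θ hθ)).continuousAt (Ioo_mem_nhds hl0 hl1) hev
  have hderiv := hasDerivAt_thetaF (hmem θ hθ)
  rw [hinv θ hθ] at hderiv
  have hD := four_mul_add_one_mul_lt_one hmem hinv hθ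
  have hne : -(1 - 4 * (θ + 1) * lam θ) / (2 * lam θ * (1 - 4 * lam θ)) ≠ 0 :=
    div_ne_zero (by linarith) (by nlinarith)
  refine (hderiv.of_local_left_inverse hcont hne (hev.mono fun t ht => ht.2)).congr_deriv ?_
  rw [inv_div, div_neg]
  ring

lemma hasDerivAt_f (f : ℝ → ℝ)
    (hf : ∀ θ, f θ = -Real.log (lam θ) - 2*θ - θ * Real.log (1 - 4 * lam θ))
    {θ : ℝ} (hl : lam θ ∈ Ioo (0:ℝ) (1/4)) (hD : 1 - 4 * (θ + 1) * lam θ ≠ 0)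
    (hL : HasDerivAt lam (-2 * lam θ * (1 - 4 * lam θ) / (1 - 4 * (θ + 1) * lam θ)) θ) :
    HasDerivAt f (-Real.log (1 - 4 * lam θ)) θ := by
  obtain ⟨hl0, hl1⟩ := hl
  have h14 : 1 - 4 * lam θ ≠ 0 := by linarith
  rw [funext hf]
  refine ((hL.log hl0.ne').neg.sub ((hasDerivAt_id' θ).const_mul 2) |>.sub
    ((hasDerivAt_id' θ).mul (((hL.const_mul 4).const_sub 1).log h14))).congr_deriv ?_
  set D := 1 - 4 * (θ + 1) * lam θ with hDdef
  set E := 1 - 4 * lam θ with hEdef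
  field_simp
  rw [hDdef, hEdef]
  ring

lemma hasDerivAt_j (j : ℝ → ℝ)
    (hj : ∀ θ, j θ = -(1/2) * Real.log (1 - 4*(θ+1)*lam θ) + (1/2) * Real.log 2)
    {θ L : ℝ} (hD : 1 - 4 * (θ + 1) * lam θ ≠ 0) (hL : HasDerivAt lam L θ) :
    HasDerivAt j (2 * (lam θ + (θ + 1) * L) / (1 - 4 * (θ + 1) * lam θ)) θ := by
  rw [funext hj]
  refine ((((hasDerivAt_id' θ).add_const 1).const_mul 4).fun_mul hL |>.const_sub 1 |>.log hD
    |>.const_mul (-(1/2)) |>.add_const _).congr_deriv ?_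
  field_simp
  ring

end InverseOfThetaF

theorem stmt11 (lam : ℝ → ℝ)
    (hmem : ∀ θ > (0:ℝ), lam θ ∈ Set.Ioo (0:ℝ) (1/4))
    (hinv : ∀ θ > (0:ℝ), thetaF (lam θ) = θ)
    (f j : ℝ → ℝ)
    (hf : ∀ θ, f θ = -Real.log (lam θ) - 2*θ - θ * Real.log (1 - 4 * lam θ))
    (hj : ∀ θ, j θ = -(1/2) * Real.log (1 - 4*(θ+1)*lam θ) + (1/2) * Real.log 2) :
    ∀ θ > (0:ℝ),
      (4*θ*lam θ - Real.exp (-(deriv f θ))) * deriv j θ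
        + (deriv (deriv f) θ / 2) * (4*θ^2*lam θ + Real.exp (-(deriv f θ)))
        + 4 * lam θ * (1/2 - θ) = 0 := by
  intro θ hθ
  have hD (t : ℝ) (ht : 0 < t) : 1 - 4 * (t + 1) * lam t ≠ 0 :=
    (sub_pos.2 (four_mul_add_one_mul_lt_one hmem hinv ht)).ne'
  have hL (t : ℝ) (ht : 0 < t) := hasDerivAt_lam hmem hinv ht
  have hf' : deriv f =ᶠ[𝓝 θ] fun t => -Real.log (1 - 4 * lam t) :=
    (eventually_gt_nhds hθ).mono fun t ht =>
      (hasDerivAt_f f hf (hmem t ht) (hD t ht) (hL t ht)).deriv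
  have h14 : 0 < 1 - 4 * lam θ := by linarith [(hmem θ hθ).2]
  have hf'' := (((hL θ hθ).const_mul 4).const_sub 1).log h14.ne' |>.fun_neg
  rw [hf'.eq_of_nhds, hf'.deriv_eq, hf''.deriv, (hasDerivAt_j j hj (hD θ hθ) (hL θ hθ)).deriv,
    neg_neg, exp_log h14]
  have hDθ := hD θ hθ
  set D := 1 - 4 * (θ + 1) * lam θ with hDdef
  field_simp
  rw [hDdef]
  ring
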